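/- arXiv:2105.02110 — 5 statements merged into one kernel-verified Lean document; each statement's English description precedes it below -/
import Mathlib

section
/- Let A be a real symmetric n×n matrix with all entries nonnegative. Then -A has a ground state (eigenvector for its minimal eigenvalue) whose entries are all nonnegative. -/
/-!
The largest eigenvalue of the real symmetric matrix `A` is the maximum of the quadratic form
`x ⬝ᵥ A *ᵥ x` on the unit sphere, and every maximiser is an eigenvector for it. Since the entries of
`A` are nonnegative, replacing a maximiser `x` by `|x|` keeps it on the sphere and can only increase
the quadratic form, so `|x|` is a nonnegative eigenvector for the largest eigenvalue of `A`, that is,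
a nonnegative ground state of `-A`.
-/

open WithLp (toLp ofLp)
open Matrix Metric Module.End

theorem Matrix.dotProduct_mulVec_le_abs {ι R : Type*} [Fintype ι] [CommRing R] [LinearOrder R]
    [IsStrictOrderedRing R] {A : Matrix ι ι R} (hA : ∀ i j, 0 ≤ A i j) (x : ι → R) :
    x ⬝ᵥ A *ᵥ x ≤ |x| ⬝ᵥ A *ᵥ |x| := by
  simp only [dotProduct, mulVec, Finset.mul_sum, Pi.abs_apply]
  refine Finset.sum_le_sum fun i _ ↦ Finset.sum_le_sum fun j _ ↦ ?_
  calc x i * (A i j * x j) ≤ |x i * (A i j * x j)| := le_abs_self _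
    _ = |x i| * (A i j * |x j|) := by rw [abs_mul, abs_mul, abs_of_nonneg (hA i j)]

theorem EuclideanSpace.norm_toLp_abs {ι : Type*} [Fintype ι] (x : ι → ℝ) :
    ‖(toLp 2 |x| : EuclideanSpace ℝ ι)‖ = ‖(toLp 2 x : EuclideanSpace ℝ ι)‖ := by
  simp only [EuclideanSpace.norm_eq, Pi.abs_apply, Real.norm_eq_abs, abs_abs]

theorem EuclideanSpace.exists_nonneg_isMaxOn_sphere {ι : Type*} [Fintype ι] [Nonempty ι]
    {f : EuclideanSpace ℝ ι → ℝ} (hf : Continuous f)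
    (hf_abs : ∀ x : ι → ℝ, f (toLp 2 x) ≤ f (toLp 2 |x|)) :
    ∃ x : ι → ℝ, 0 ≤ x ∧ ‖(toLp 2 x : EuclideanSpace ℝ ι)‖ = 1 ∧
      IsMaxOn f (sphere 0 1) (toLp 2 x) := by
  obtain ⟨x, hx, hmax⟩ := (isCompact_sphere (0 : EuclideanSpace ℝ ι) 1).exists_isMaxOn
    (NormedSpace.sphere_nonempty.mpr zero_le_one) hf.continuousOn
  have hnorm : ‖(toLp 2 |ofLp x| : EuclideanSpace ℝ ι)‖ = 1 := by
    rw [norm_toLp_abs]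
    simpa using hx
  exact ⟨|ofLp x|, abs_nonneg _, hnorm, fun y hy ↦ (hmax hy).trans (hf_abs (ofLp x))⟩

theorem ContinuousLinearMap.le_iSup_rayleighQuotient_of_hasEigenvector {𝕜 E : Type*} [RCLike 𝕜]
    [NormedAddCommGroup E] [InnerProductSpace 𝕜 E] (T : E →L[𝕜] E) {μ : ℝ} {x : E}
    (hx : HasEigenvector (T : E →ₗ[𝕜] E) μ x) :
    μ ≤ ⨆ x : { x : E // x ≠ 0 }, T.rayleighQuotient x := by
  have hx0 : ‖x‖ ≠ 0 := norm_ne_zero_iff.mpr hx.2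
  have hμ : T.rayleighQuotient x = μ := by
    have hTx : T x = (μ : 𝕜) • x := hx.apply_eq_smul
    rw [rayleighQuotient, reApplyInnerSelf_apply, hTx, inner_smul_left,
      inner_self_eq_norm_sq_to_K]
    simp only [RCLike.conj_ofReal, ← RCLike.ofReal_pow, ← RCLike.ofReal_mul, RCLike.ofReal_re]
    field_simp
  have hbdd : BddAbove (Set.range fun y : { y : E // y ≠ 0 } ↦ T.rayleighQuotient y) :=
    ⟨‖T‖, Set.forall_mem_range.mpr fun y ↦ (le_abs_self _).trans (T.rayleighQuotient_le_norm y)⟩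
  exact hμ ▸ le_ciSup hbdd ⟨x, hx.2⟩

namespace Matrix

variable {ι : Type*} [Fintype ι] [DecidableEq ι]

theorem hasEigenvector_toEuclideanCLM_toLp_iff {𝕜 : Type*} [RCLike 𝕜] (A : Matrix ι ι 𝕜)
    (μ : 𝕜) (v : ι → 𝕜) :
    HasEigenvector (toEuclideanCLM (n := ι) (𝕜 := 𝕜) A : EuclideanSpace 𝕜 ι →ₗ[𝕜] _) μ
      (toLp 2 v) ↔ A *ᵥ v = μ • v ∧ v ≠ 0 := by
  simp [hasEigenvector_iff, ← WithLp.toLp_smul]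

theorem reApplyInnerSelf_toEuclideanCLM (A : Matrix ι ι ℝ) (x : EuclideanSpace ℝ ι) :
    (toEuclideanCLM (n := ι) (𝕜 := ℝ) A).reApplyInnerSelf x = ofLp x ⬝ᵥ A *ᵥ ofLp x := by
  rw [ContinuousLinearMap.reApplyInnerSelf_apply, RCLike.re_to_real, real_inner_comm,
    inner_toEuclideanCLM]

end Matrix

/-- Perron–Frobenius property: a real symmetric entrywise-nonnegative matrix `A`
is such that `-A` has a ground state (eigenvector of minimal eigenvalue of `-A`)
with all entries nonnegative. -/
theorem stmt0 (n : ℕ) (hn : 0 < n) (A : Matrix (Fin n) (Fin n) ℝ)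
    (hsymm : A.IsSymm) (hpos : ∀ i j, 0 ≤ A i j) :
    ∃ (μ : ℝ) (v : Fin n → ℝ), v ≠ 0 ∧ (∀ i, 0 ≤ v i) ∧
      (-A).mulVec v = μ • v ∧
      ∀ (μ' : ℝ) (w : Fin n → ℝ), w ≠ 0 → (-A).mulVec w = μ' • w → μ ≤ μ' := by
  have : Nonempty (Fin n) := ⟨⟨0, hn⟩⟩
  set T := toEuclideanCLM (n := Fin n) (𝕜 := ℝ) A with hT_def
  have hT : IsSelfAdjoint T :=
    IsSelfAdjoint.map ((conjTranspose_eq_transpose_of_trivial A).trans hsymm) _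
  obtain ⟨v, hv_nonneg, hv_norm, hv_max⟩ :=
    EuclideanSpace.exists_nonneg_isMaxOn_sphere T.reApplyInnerSelf_continuous fun x ↦ by
      simpa only [hT_def, reApplyInnerSelf_toEuclideanCLM] using dotProduct_mulVec_le_abs hpos x
  have hv_ne : (toLp 2 v : EuclideanSpace ℝ (Fin n)) ≠ 0 := norm_ne_zero_iff.mp (by simp [hv_norm])
  obtain ⟨hAv, hv0⟩ := (hasEigenvector_toEuclideanCLM_toLp_iff A _ v).mp
    (hT.hasEigenvector_of_isMaxOn hv_ne (hv_norm ▸ hv_max))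
  refine ⟨-_, v, hv0, hv_nonneg, by rw [neg_mulVec, hAv, neg_smul], fun μ' w hw hAw ↦ ?_⟩
  have hw_eig : HasEigenvector (T : EuclideanSpace ℝ (Fin n) →ₗ[ℝ] _) (-μ' : ℝ) (toLp 2 w) :=
    (hasEigenvector_toEuclideanCLM_toLp_iff A _ w).mpr
      ⟨by rw [neg_smul, ← hAw, neg_mulVec, neg_neg], hw⟩
  exact neg_le.mpr (T.le_iSup_rayleighQuotient_of_hasEigenvector hw_eig)
end

section
/- Let A be a real symmetric n×n matrix such that there exists k₀ > 0 with A^k entrywise nonnegative for all k > k₀ (A is eventually nonnegative). Then -A has a ground state with all entries nonnegative. -/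
/-!
Let `c` be the largest eigenvalue of `A` and `v` a `c`-eigenvector. For odd `k` with `A ^ k`
entrywise nonnegative, `M = c ^ k • 1 - A ^ k` is positive semidefinite, while nonnegativity of
`A ^ k` gives `|v| ⬝ M |v| ≤ v ⬝ M v = 0`. Hence `M |v| = 0`, i.e. `|v|` is a `c ^ k`-eigenvector
of `A ^ k`; since `x ↦ x ^ k` is injective for odd `k`, it is a `c`-eigenvector of `A`, hence a
nonnegative ground state of `-A`.
-/

open Matrix
open scoped MatrixOrder

namespace Matrix

variable {ι : Type*} [Fintype ι] [DecidableEq ι]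

lemma mem_spectrum_of_mulVec_eq_smul {K : Type*} [Field K] {A : Matrix ι ι K} {μ : K}
    {v : ι → K} (hv : v ≠ 0) (h : A *ᵥ v = μ • v) : μ ∈ spectrum K A := by
  rw [← spectrum_toLin']
  exact Module.End.HasEigenvalue.mem_spectrum <|
    Module.End.hasEigenvalue_of_hasEigenvector ⟨Module.End.mem_eigenspace_iff.mpr h, hv⟩

lemma pow_mulVec_eq_pow_smul {R : Type*} [CommSemiring R] {A : Matrix ι ι R} {μ : R}
    {v : ι → R} (h : A *ᵥ v = μ • v) (k : ℕ) : A ^ k *ᵥ v = μ ^ k • v := by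
  induction k with
  | zero => simp
  | succ k ih => rw [pow_succ, ← mulVec_mulVec, h, mulVec_smul, ih, smul_smul, pow_succ']

lemma smul_one_sub_mulVec {R : Type*} [CommRing R] (A : Matrix ι ι R) (c : R) (v : ι → R) :
    (c • 1 - A) *ᵥ v = c • v - A *ᵥ v := by
  rw [sub_mulVec, smul_mulVec, one_mulVec]

omit [DecidableEq ι] in
lemma dotProduct_mulVec_le_abs_s1 {B : Matrix ι ι ℝ} (hB : ∀ i j, 0 ≤ B i j) (v : ι → ℝ) :
    v ⬝ᵥ B *ᵥ v ≤ |v| ⬝ᵥ B *ᵥ |v| := by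
  simp only [dotProduct, mulVec, Finset.mul_sum, Pi.abs_apply]
  refine Finset.sum_le_sum fun i _ => Finset.sum_le_sum fun j _ => ?_
  calc v i * (B i j * v j) ≤ |v i * (B i j * v j)| := le_abs_self _
    _ = |v i| * (B i j * |v j|) := by rw [abs_mul, abs_mul, abs_of_nonneg (hB i j)]

namespace IsHermitian

variable {A : Matrix ι ι ℝ} (hA : A.IsHermitian)
include hA

lemma exists_mulVec_eq_smul_mem_upperBounds_spectrum [Nonempty ι] :
    ∃ c v, v ≠ 0 ∧ A *ᵥ v = c • v ∧ c ∈ upperBounds (spectrum ℝ A) := by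
  obtain ⟨i, hi⟩ := Finite.exists_max hA.eigenvalues
  refine ⟨hA.eigenvalues i, hA.eigenvectorBasis i, ?_, hA.mulVec_eigenvectorBasis i, ?_⟩
  · exact (hA.eigenvectorBasis.orthonormal.ne_zero i).imp
      fun h => by simpa using congrArg (WithLp.toLp 2) h
  · rw [hA.spectrum_real_eq_range_eigenvalues]
    rintro - ⟨j, rfl⟩
    exact hi j

lemma cfc_const_pow_sub_pow (c : ℝ) (k : ℕ) :
    cfc (fun x => c ^ k - x ^ k) A = c ^ k • 1 - A ^ k := by
  rw [cfc_sub _ _ A, cfc_const _ A hA.isSelfAdjoint, cfc_pow_id A k hA.isSelfAdjoint,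
    Algebra.algebraMap_eq_smul_one]

lemma posSemidef_smul_one_sub_pow {c : ℝ} (hc : c ∈ upperBounds (spectrum ℝ A)) {k : ℕ}
    (hk : Odd k) : (c ^ k • 1 - A ^ k).PosSemidef := by
  rw [← hA.cfc_const_pow_sub_pow, ← nonneg_iff_posSemidef]
  exact cfc_nonneg fun x hx => sub_nonneg.mpr (hk.strictMono_pow.monotone (hc hx))

lemma mulVec_eq_smul_of_pow_mulVec_eq_pow_smul {c : ℝ} {k : ℕ} (hk : Odd k) {u : ι → ℝ}
    (h : A ^ k *ᵥ u = c ^ k • u) : A *ᵥ u = c • u := by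
  have hfactor :
      cfc (fun x => (c - x) / (c ^ k - x ^ k)) A * (c ^ k • 1 - A ^ k) = c • 1 - A := by
    have hlin : cfc (fun x => c - x) A = c • 1 - A := by
      simpa using hA.cfc_const_pow_sub_pow c 1
    rw [← hlin, ← hA.cfc_const_pow_sub_pow,
      ← cfc_mul _ _ A (finite_real_spectrum.continuousOn _)]
    congr 1
    funext x
    -- at `x = c` both sides vanish, the quotient being the junk value `0 / 0 = 0`
    rcases eq_or_ne x c with rfl | hx
    · simp
    · exact div_mul_cancel₀ _
        (sub_ne_zero.mpr fun h => hx (hk.strictMono_pow.injective h).symm)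
  have hker : (c • 1 - A) *ᵥ u = 0 := by
    rw [← hfactor, ← mulVec_mulVec, smul_one_sub_mulVec, h, sub_self, mulVec_zero]
  rw [smul_one_sub_mulVec, sub_eq_zero] at hker
  exact hker.symm

lemma mulVec_abs_eq_smul {c : ℝ} (hc : c ∈ upperBounds (spectrum ℝ A)) {k : ℕ} (hk : Odd k)
    (hAk : ∀ i j, 0 ≤ (A ^ k) i j) {v : ι → ℝ} (hv : A *ᵥ v = c • v) :
    A *ᵥ |v| = c • |v| := by
  have hM := hA.posSemidef_smul_one_sub_pow hc hk
  have hquad (x : ι → ℝ) :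
      x ⬝ᵥ (c ^ k • 1 - A ^ k) *ᵥ x = c ^ k * (x ⬝ᵥ x) - x ⬝ᵥ A ^ k *ᵥ x := by
    rw [smul_one_sub_mulVec, dotProduct_sub, dotProduct_smul, smul_eq_mul]
  have hv0 : v ⬝ᵥ (c ^ k • 1 - A ^ k) *ᵥ v = 0 := by
    rw [smul_one_sub_mulVec, pow_mulVec_eq_pow_smul hv, sub_self, dotProduct_zero]
  have habs : |v| ⬝ᵥ |v| = v ⬝ᵥ v := by
    simp only [dotProduct, Pi.abs_apply, abs_mul_abs_self]
  have hzero : |v| ⬝ᵥ (c ^ k • 1 - A ^ k) *ᵥ |v| = 0 := by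
    refine le_antisymm ?_ (by simpa using hM.dotProduct_mulVec_nonneg |v|)
    rw [hquad, habs, ← hv0, hquad]
    linarith [dotProduct_mulVec_le_abs_s1 hAk v]
  have hker := (hM.dotProduct_mulVec_zero_iff |v|).mp (by simpa using hzero)
  rw [smul_one_sub_mulVec, sub_eq_zero] at hker
  exact hA.mulVec_eq_smul_of_pow_mulVec_eq_pow_smul hk hker.symm

end IsHermitian

end Matrix

/-- If a real symmetric matrix `A` is eventually (entrywise) nonnegative, then
`-A` has a ground state with all entries nonnegative. -/
theorem stmt1 (n : ℕ) (hn : 0 < n) (A : Matrix (Fin n) (Fin n) ℝ)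
    (hsymm : A.IsSymm)
    (hev : ∃ k₀ : ℕ, 0 < k₀ ∧ ∀ k, k₀ < k → ∀ i j, 0 ≤ (A ^ k) i j) :
    ∃ (μ : ℝ) (v : Fin n → ℝ), v ≠ 0 ∧ (∀ i, 0 ≤ v i) ∧
      (-A).mulVec v = μ • v ∧
      ∀ (μ' : ℝ) (w : Fin n → ℝ), w ≠ 0 → (-A).mulVec w = μ' • w → μ ≤ μ' := by
  have hA : A.IsHermitian := isHermitian_iff_isSymm.mpr hsymm
  have : Nonempty (Fin n) := ⟨⟨0, hn⟩⟩
  obtain ⟨c, v, hv, hAv, hc⟩ := hA.exists_mulVec_eq_smul_mem_upperBounds_spectrum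
  obtain ⟨k₀, -, hk₀⟩ := hev
  have hAu := hA.mulVec_abs_eq_smul hc (odd_two_mul_add_one k₀) (hk₀ _ (by omega)) hAv
  refine ⟨-c, |v|, (Pi.abs_eq_zero v).not.mpr hv, fun i => abs_nonneg (v i), ?_,
    fun μ' w hw hAw => ?_⟩
  · rw [neg_mulVec, hAu, neg_smul]
  · rw [neg_mulVec, neg_eq_iff_eq_neg, ← neg_smul] at hAw
    linarith [hc (mem_spectrum_of_mulVec_eq_smul hw hAw)]
end

section
/- Let G be a finite undirected graph with positive rational vertex weights w, and suppose λ_{ij} ≥ min(w_i, w_j) for every edge ij. Then the maximum over all x ∈ {0,1}^V of Y(x) = Σ_i w_i x_i − Σ_{ij ∈ E} λ_{ij} x_i x_j equals the maximum total weight of an independent set in G. -/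
/-!
An independent set is attained by its indicator vector, which pays no penalty. Conversely, if the
support of `x` contains an edge `ij` with `w i ≤ w j`, switching `x i` off loses `w i` but saves at
least the penalty `λ_ij ≥ min (w i) (w j) = w i`, while every other penalty can only shrink since
penalties are nonnegative. So `Y` does not decrease, the support shrinks, and repeating this ends
at an independent set whose weight is at least `Y x`.
-/

open Finset

theorem isGreatest_iff_of_subset_of_forall_exists_le {α : Type*} [PartialOrder α]
    {s t : Set α} {a : α} (hts : t ⊆ s) (hst : ∀ x ∈ s, ∃ y ∈ t, x ≤ y) :
    IsGreatest s a ↔ IsGreatest t a := by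
  constructor
  · rintro ⟨has, hub⟩
    obtain ⟨y, hyt, hay⟩ := hst a has
    obtain rfl : a = y := le_antisymm hay (hub (hts hyt))
    exact ⟨hyt, fun z hz => hub (hts hz)⟩
  · rintro ⟨hat, hub⟩
    refine ⟨hts hat, fun x hx => ?_⟩
    obtain ⟨y, hyt, hxy⟩ := hst x hx
    exact hxy.trans (hub hyt)

namespace QUBO

section Penalty

variable {V : Type*} (lam : V → V → ℚ) (hsym : ∀ i j, lam i j = lam j i)

def edgePenalty (x : V → Bool) : Sym2 V → ℚ :=
  Sym2.lift ⟨fun i j => lam i j * (if x i then 1 else 0) * (if x j then 1 else 0),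
    fun i j => by simp only [hsym i j]; ring⟩

@[simp]
theorem edgePenalty_mk (x : V → Bool) (i j : V) :
    edgePenalty lam hsym x s(i, j) =
      lam i j * (if x i then 1 else 0) * (if x j then 1 else 0) :=
  rfl

theorem edgePenalty_mono {x x' : V → Bool} (hx : x' ≤ x) {i j : V} (hij : 0 ≤ lam i j) :
    edgePenalty lam hsym x' s(i, j) ≤ edgePenalty lam hsym x s(i, j) := by
  have hind : ∀ a b : Bool, a ≤ b → (if a then 1 else 0 : ℚ) ≤ if b then 1 else 0 := by
    decide +revert
  have hnonneg : ∀ b : Bool, (0 : ℚ) ≤ if b then 1 else 0 := fun b => by cases b <;> simp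
  simp only [edgePenalty_mk]
  exact mul_le_mul (mul_le_mul_of_nonneg_left (hind _ _ (hx i)) hij) (hind _ _ (hx j)) (hnonneg _)
    (mul_nonneg hij (hnonneg _))

end Penalty

section Objective

variable {V : Type*} [Fintype V] [DecidableEq V] (G : SimpleGraph V) [DecidableRel G.Adj]
  (w : V → ℚ) (lam : V → V → ℚ) (hsym : ∀ i j, lam i j = lam j i)

def objective (x : V → Bool) : ℚ :=
  ∑ i, w i * (if x i then 1 else 0) - ∑ e ∈ G.edgeFinset, edgePenalty lam hsym x e

theorem objective_indicator {S : Finset V} (hS : ∀ i ∈ S, ∀ j ∈ S, ¬ G.Adj i j) :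
    objective G w lam hsym (fun i => decide (i ∈ S)) = ∑ i ∈ S, w i := by
  have hpenalty : ∑ e ∈ G.edgeFinset, edgePenalty lam hsym (fun i => decide (i ∈ S)) e = 0 := by
    refine sum_eq_zero fun e he => ?_
    induction e using Sym2.ind with
    | _ i j =>
      have hij : G.Adj i j := by simpa using he
      by_cases hi : i ∈ S
      · have hj : j ∉ S := fun hj => hS i hi j hj hij
        simp [hj]
      · simp [hi]
  rw [objective, hpenalty, sub_zero]
  simp

theorem objective_le_objective_update {x : V → Bool} {i j : V} (hij : G.Adj i j)
    (hi : x i = true) (hj : x j = true) (hwi : w i ≤ lam i j)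
    (hlam0 : ∀ a b, G.Adj a b → 0 ≤ lam a b) :
    objective G w lam hsym x ≤ objective G w lam hsym (Function.update x i false) := by
  set x' := Function.update x i false
  have hweight : ∑ k, w k * (if x k then 1 else 0) - ∑ k, w k * (if x' k then 1 else 0) = w i := by
    rw [← sum_sub_distrib, sum_eq_single i (fun k _ hk => by simp [x', hk]) (by simp)]
    simp [x', hi]
  have hpenalty : lam i j ≤ ∑ e ∈ G.edgeFinset, edgePenalty lam hsym x e -
      ∑ e ∈ G.edgeFinset, edgePenalty lam hsym x' e := by
    have hx' : x' ≤ x := fun k => by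
      by_cases hk : k = i <;> simp [x', hk]
    have hedge : s(i, j) ∈ G.edgeFinset := by simpa using hij
    rw [← sum_sub_distrib]
    refine le_of_eq_of_le ?_ (single_le_sum (fun e he => ?_) hedge)
    · simp [x', hi, hj, G.ne_of_adj hij |>.symm]
    · induction e using Sym2.ind with
      | _ a b => exact sub_nonneg.mpr (edgePenalty_mono lam hsym hx' (hlam0 a b (by simpa using he)))
  unfold objective
  linarith

theorem card_filter_update_false_lt {x : V → Bool} {i : V} (hi : x i = true) :
    #{k | Function.update x i false k = true} < #{k | x k = true} := by
  refine card_lt_card ⟨fun k => ?_, fun hsub => ?_⟩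
  · by_cases hk : k = i <;> simp [hk]
  · simpa using hsub (mem_filter.mpr ⟨mem_univ i, hi⟩)

theorem exists_indep_objective_le (hlam0 : ∀ i j, G.Adj i j → 0 ≤ lam i j)
    (hlam : ∀ i j, G.Adj i j → min (w i) (w j) ≤ lam i j) (x : V → Bool) :
    ∃ S : Finset V, (∀ i ∈ S, ∀ j ∈ S, ¬ G.Adj i j) ∧
      objective G w lam hsym x ≤ ∑ i ∈ S, w i := by
  by_cases hindep : ∀ i ∈ ({k | x k = true} : Finset V), ∀ j ∈ ({k | x k = true} : Finset V),
      ¬ G.Adj i j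
  · have hx : (fun k => decide (k ∈ ({k | x k = true} : Finset V))) = x := by
      funext k
      simp
    refine ⟨_, hindep, le_of_eq ?_⟩
    rw [← objective_indicator G w lam hsym hindep, hx]
  · push Not at hindep
    obtain ⟨a, ha, b, hb, hab⟩ := hindep
    simp only [mem_filter, mem_univ, true_and] at ha hb
    obtain ⟨i, j, hij, hi, hj, hwi⟩ :
        ∃ i j, G.Adj i j ∧ x i = true ∧ x j = true ∧ w i ≤ lam i j := by
      rcases le_total (w a) (w b) with hwab | hwba
      · exact ⟨a, b, hab, ha, hb, min_eq_left hwab ▸ hlam a b hab⟩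
      · exact ⟨b, a, hab.symm, hb, ha, hsym a b ▸ min_eq_right hwba ▸ hlam a b hab⟩
    obtain ⟨S, hS, hle⟩ := exists_indep_objective_le hlam0 hlam (Function.update x i false)
    exact ⟨S, hS, (objective_le_objective_update G w lam hsym hij hi hj hwi hlam0).trans hle⟩
termination_by #{k | x k = true}
decreasing_by exact card_filter_update_false_lt hi

end Objective

end QUBO

open QUBO in
/-- QUBO formulation of MWIS: if `λ_{ij} ≥ min(w_i, w_j)` on every edge, the
maximum of `Y(x) = Σ w_i x_i - Σ_{ij∈E} λ_{ij} x_i x_j` over `{0,1}^V` equals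
the maximum total weight of an independent set of `G`. -/
theorem stmt4 {V : Type*} [Fintype V] [DecidableEq V]
    (G : SimpleGraph V) [DecidableRel G.Adj]
    (w : V → ℚ) (hw : ∀ i, 0 < w i)
    (lam : V → V → ℚ) (hsym : ∀ i j, lam i j = lam j i)
    (hlam : ∀ i j, G.Adj i j → min (w i) (w j) ≤ lam i j)
    (Y : (V → Bool) → ℚ)
    (hY : ∀ x, Y x = ∑ i, w i * (if x i then 1 else 0) -
      ∑ e ∈ G.edgeFinset,
        Sym2.lift ⟨fun i j => lam i j * (if x i then 1 else 0) * (if x j then 1 else 0),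
          fun i j => by simp only [hsym i j]; ring⟩ e)
    (m : ℚ) :
    IsGreatest (Set.range Y) m ↔
      IsGreatest {y | ∃ S : Finset V, (∀ i ∈ S, ∀ j ∈ S, ¬ G.Adj i j) ∧
        y = ∑ i ∈ S, w i} m := by
  obtain rfl : Y = objective G w lam hsym := funext hY
  have hlam0 : ∀ i j, G.Adj i j → 0 ≤ lam i j := fun i j hij =>
    (lt_min (hw i) (hw j)).le.trans (hlam i j hij)
  refine isGreatest_iff_of_subset_of_forall_exists_le ?_ ?_
  · rintro _ ⟨S, hS, rfl⟩
    exact ⟨_, objective_indicator G w lam hsym hS⟩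
  · rintro _ ⟨x, rfl⟩
    obtain ⟨S, hS, hle⟩ := exists_indep_objective_le G w lam hsym hlam0 hlam x
    exact ⟨_, ⟨S, hS, rfl⟩, hle⟩
end

section
/- Let G be a finite undirected graph with positive vertex weights w, and suppose λ_{ij} > min(w_i, w_j) for every edge ij. If x* maximizes Y(x) = Σ_i w_i x_i − Σ_{ij ∈ E} λ_{ij} x_i x_j over {0,1}^V, then the set S = {i : x*_i = 1} is an independent set of G of maximum total weight. -/
/-!
Deleting a vertex `i` from a vector whose support contains an edge `ij` increases `Y` by at
least `λ_{ij} - w_i`, because every penalty term is nonnegative and monotone in the support.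
Choosing `i` as the lighter endpoint makes this positive, so a maximizer has independent support.
On vectors with independent support `Y` is the weight of the support, so the maximizer's support
is at least as heavy as any independent set.
-/

open Finset

namespace SimpleGraph

variable {V R : Type*} [Fintype V] [CommRing R]

def quboPenaltyTerm (lam : V → V → R) (hsym : ∀ i j, lam i j = lam j i) (x : V → Bool) :
    Sym2 V → R :=
  Sym2.lift ⟨fun i j => lam i j * (if x i then 1 else 0) * (if x j then 1 else 0),
    fun i j => by simp only [hsym i j]; ring⟩

def quboPenalty (G : SimpleGraph V) [DecidableRel G.Adj] (lam : V → V → R)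
    (hsym : ∀ i j, lam i j = lam j i) (x : V → Bool) : R :=
  ∑ e ∈ G.edgeFinset, quboPenaltyTerm lam hsym x e

def quboObjective (G : SimpleGraph V) [DecidableRel G.Adj] (w : V → R) (lam : V → V → R)
    (hsym : ∀ i j, lam i j = lam j i) (x : V → Bool) : R :=
  ∑ i, w i * (if x i then 1 else 0) - G.quboPenalty lam hsym x

variable {G : SimpleGraph V} [DecidableRel G.Adj] (w : V → R) {lam : V → V → R}
  (hsym : ∀ i j, lam i j = lam j i)

lemma quboPenalty_eq_zero {x : V → Bool}
    (hx : ∀ i j, x i = true → x j = true → ¬ G.Adj i j) :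
    G.quboPenalty lam hsym x = 0 := by
  refine sum_eq_zero fun e he => ?_
  induction e using Sym2.ind with
  | _ a b =>
    have hab := mem_edgeFinset.mp he
    cases ha : x a <;> cases hb : x b <;> simp_all [quboPenaltyTerm]

lemma quboObjective_eq_sum_of_independent {x : V → Bool}
    (hx : ∀ i j, x i = true → x j = true → ¬ G.Adj i j) :
    G.quboObjective w lam hsym x = ∑ i ∈ univ.filter (fun i => x i = true), w i := by
  rw [quboObjective, quboPenalty_eq_zero hsym hx, sub_zero, sum_filter]
  exact sum_congr rfl fun k _ => by cases x k <;> simp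

variable [LinearOrder R] [IsStrictOrderedRing R]

lemma quboPenaltyTerm_mono (hlam : ∀ i j, G.Adj i j → 0 ≤ lam i j) {x y : V → Bool}
    (hxy : x ≤ y) {e : Sym2 V} (he : e ∈ G.edgeFinset) :
    quboPenaltyTerm lam hsym x e ≤ quboPenaltyTerm lam hsym y e := by
  induction e using Sym2.ind with
  | _ a b =>
    have ind_mono : ∀ k, (if x k then (1 : R) else 0) ≤ if y k then 1 else 0 := fun k => by
      have hk := hxy k
      revert hk
      cases x k <;> cases y k <;> simp
    have hab : 0 ≤ lam a b := hlam a b (mem_edgeFinset.mp he)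
    simp only [quboPenaltyTerm, Sym2.lift_mk]
    gcongr
    · exact ind_mono a
    · exact ind_mono b

lemma quboPenalty_add_le (hlam : ∀ i j, G.Adj i j → 0 ≤ lam i j) {x y : V → Bool}
    (hxy : x ≤ y) {i j : V} (hij : G.Adj i j) (hxi : x i = false) (hyi : y i = true)
    (hyj : y j = true) :
    G.quboPenalty lam hsym x + lam i j ≤ G.quboPenalty lam hsym y := by
  have hedge : s(i, j) ∈ G.edgeFinset := mem_edgeFinset.mpr hij
  have hgap :
      quboPenaltyTerm lam hsym x s(i, j) + lam i j = quboPenaltyTerm lam hsym y s(i, j) := by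
    simp [quboPenaltyTerm, hxi, hyi, hyj]
  classical
  unfold quboPenalty
  rw [← add_sum_erase _ _ hedge, ← add_sum_erase _ _ hedge, add_right_comm, hgap]
  gcongr with e he
  exact quboPenaltyTerm_mono hsym hlam hxy (mem_of_mem_erase he)

lemma quboObjective_add_sub_le_update_false [DecidableEq V]
    (hlam : ∀ i j, G.Adj i j → 0 ≤ lam i j)
    {x : V → Bool} {i j : V} (hij : G.Adj i j) (hxi : x i = true) (hxj : x j = true) :
    G.quboObjective w lam hsym x + lam i j - w i ≤
      G.quboObjective w lam hsym (Function.update x i false) := by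
  have hle : Function.update x i false ≤ x := fun k => by
    rcases eq_or_ne k i with rfl | hk <;> simp [*]
  have hpen := quboPenalty_add_le hsym hlam hle hij (by simp) hxi hxj
  have hweight : ∑ k, w k * (if Function.update x i false k then (1 : R) else 0) + w i =
      ∑ k, w k * (if x k then 1 else 0) := by
    rw [← add_sum_erase _ _ (mem_univ i), ← add_sum_erase _ _ (mem_univ i),
      sum_congr rfl fun k hk => by rw [Function.update_of_ne (ne_of_mem_erase hk)]]
    simp [hxi]
  unfold quboObjective
  linarith

theorem independent_of_isMax_quboObjective [DecidableEq V] (hw : ∀ i, 0 < w i)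
    (hlam : ∀ i j, G.Adj i j → min (w i) (w j) < lam i j) {x : V → Bool}
    (hmax : ∀ y, G.quboObjective w lam hsym y ≤ G.quboObjective w lam hsym x) :
    ∀ i j, x i = true → x j = true → ¬ G.Adj i j := by
  have hlam0 : ∀ i j, G.Adj i j → 0 ≤ lam i j := fun i j h =>
    (lt_min (hw i) (hw j)).trans (hlam i j h) |>.le
  have not_weight_lt : ∀ i j, G.Adj i j → x i = true → x j = true → ¬ w i < lam i j :=
    fun i j hij hi hj hlt => (hmax (Function.update x i false)).not_gt <| by
      linarith [quboObjective_add_sub_le_update_false w hsym hlam0 hij hi hj]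
  intro i j hi hj hij
  rcases min_choice (w i) (w j) with hmin | hmin
  · exact not_weight_lt i j hij hi hj (hmin ▸ hlam i j hij)
  · exact not_weight_lt j i hij.symm hj hi (hsym i j ▸ hmin ▸ hlam i j hij)

end SimpleGraph

open SimpleGraph in
/-- If `λ_{ij} > min(w_i, w_j)` on every edge and `x*` maximizes the QUBO
objective `Y`, then `{i : x*_i = 1}` is a maximum-weight independent set. -/
theorem stmt5 {V : Type*} [Fintype V] [DecidableEq V]
    (G : SimpleGraph V) [DecidableRel G.Adj]
    (w : V → ℚ) (hw : ∀ i, 0 < w i)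
    (lam : V → V → ℚ) (hsym : ∀ i j, lam i j = lam j i)
    (hlam : ∀ i j, G.Adj i j → min (w i) (w j) < lam i j)
    (Y : (V → Bool) → ℚ)
    (hY : ∀ x, Y x = ∑ i, w i * (if x i then 1 else 0) -
      ∑ e ∈ G.edgeFinset,
        Sym2.lift ⟨fun i j => lam i j * (if x i then 1 else 0) * (if x j then 1 else 0),
          fun i j => by simp only [hsym i j]; ring⟩ e)
    (xstar : V → Bool) (hmax : ∀ x, Y x ≤ Y xstar) :
    (∀ i ∈ Finset.univ.filter (fun i => xstar i = true),
      ∀ j ∈ Finset.univ.filter (fun i => xstar i = true), ¬ G.Adj i j) ∧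
    ∀ S : Finset V, (∀ i ∈ S, ∀ j ∈ S, ¬ G.Adj i j) →
      ∑ i ∈ S, w i ≤ ∑ i ∈ Finset.univ.filter (fun i => xstar i = true), w i := by
  obtain rfl : Y = G.quboObjective w lam hsym := funext hY
  have hind := independent_of_isMax_quboObjective w hsym hw hlam hmax
  refine ⟨fun i hi j hj => hind i j (mem_filter.mp hi).2 (mem_filter.mp hj).2, fun S hS => ?_⟩
  have hSind : ∀ i j, decide (i ∈ S) = true → decide (j ∈ S) = true → ¬ G.Adj i j :=
    fun i j hi hj => hS i (of_decide_eq_true hi) j (of_decide_eq_true hj)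
  calc ∑ i ∈ S, w i = G.quboObjective w lam hsym (fun i => decide (i ∈ S)) := by
        rw [quboObjective_eq_sum_of_independent w hsym hSind]
        simp
    _ ≤ G.quboObjective w lam hsym xstar := hmax _
    _ = _ := quboObjective_eq_sum_of_independent w hsym hind
end

section
/- Suppose real sequences c(λ), d(λ) satisfy c(λ) = c₀ − λ·K·d₀ and d(λ) = d₀ + λ·K·c₀ for all λ ∈ [−δ, δ], with K > 0, δ > 0. If |c(λ)| is strictly decreasing and |d(λ)| is strictly increasing on [−δ, δ], then c₀·d₀ > 0. -/
/-! Comparing the endpoints `λ = 0` and `λ = δ`: `|c₀ - δ K d₀| < |c₀|` already forces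
`c₀` and `K d₀` to have the same sign, since after squaring it reads
`(δ K d₀)² < 2 δ c₀ (K d₀)`. -/

lemma mul_pos_of_abs_sub_mul_lt_abs {a b t : ℝ} (ht : 0 < t) (h : |a - t * b| < |a|) :
    0 < a * b := by
  have hsq : (a - t * b) ^ 2 < a ^ 2 := sq_lt_sq.mpr h
  have hscaled : t * (t * b ^ 2) < t * (2 * (a * b)) := by linarith
  have hlt : t * b ^ 2 < 2 * (a * b) := lt_of_mul_lt_mul_left hscaled ht.le
  linarith [mul_nonneg ht.le (sq_nonneg b)]

theorem stmt9_general (c : ℝ → ℝ) (c₀ d₀ K δ : ℝ) (hK : 0 < K) (hδ : 0 < δ)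
    (hc : ∀ lam ∈ Set.Icc (-δ) δ, c lam = c₀ - lam * K * d₀)
    (hcdec : StrictAntiOn (fun lam => |c lam|) (Set.Icc (-δ) δ)) :
    0 < c₀ * d₀ := by
  have h0 : (0 : ℝ) ∈ Set.Icc (-δ) δ := ⟨by linarith, hδ.le⟩
  have hδmem : δ ∈ Set.Icc (-δ) δ := ⟨by linarith, le_rfl⟩
  have hdec : |c₀ - δ * (K * d₀)| < |c₀| := by
    simpa [hc 0 h0, hc δ hδmem, mul_assoc] using hcdec h0 hδmem hδ
  have hpos : 0 < K * (c₀ * d₀) := by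
    simpa [mul_left_comm] using mul_pos_of_abs_sub_mul_lt_abs hδ hdec
  exact (mul_pos_iff_of_pos_left hK).mp hpos

/-- "Same sign" property (C3): if `c(λ) = c₀ - λKd₀` and `d(λ) = d₀ + λKc₀`
with `K, δ > 0`, and `|c|` is strictly decreasing while `|d|` is strictly
increasing on `[-δ, δ]`, then `c₀ d₀ > 0`. -/
theorem stmt9 (c d : ℝ → ℝ) (c₀ d₀ K δ : ℝ) (hK : 0 < K) (hδ : 0 < δ)
    (hc : ∀ lam ∈ Set.Icc (-δ) δ, c lam = c₀ - lam * K * d₀)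
    (hd : ∀ lam ∈ Set.Icc (-δ) δ, d lam = d₀ + lam * K * c₀)
    (hcdec : StrictAntiOn (fun lam => |c lam|) (Set.Icc (-δ) δ))
    (hdinc : StrictMonoOn (fun lam => |d lam|) (Set.Icc (-δ) δ)) :
    0 < c₀ * d₀ :=
  stmt9_general c c₀ d₀ K δ hK hδ hc hcdec
end
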